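/- Let λ > 0 be a real number and a_1, a_2, a_3, a_4 ∈ ℝ. Every complex root of the polynomial p(s) = s⁴ + a_4 λ s³ + a_3 λ s² + a_2 λ s + a_1 λ has strictly negative real part if and only if a_1 > 0, a_2 > 0, a_3 > 0, a_4 > 0, (a_3 a_4 / a_2)·λ > 1, and ((a_3 a_4 / a_2) − (a_1 a_4² / a_2²))·λ > 1. -/

import Mathlib

/-!
A monic real quartic factors over `ℝ` into two monic quadratics `X² + pX + q` and `X² + rX + t`,
and a real monic quadratic has both roots in the open left half-plane iff its two coefficients
are positive. For the coefficients `c₃ = p + r`, `c₂ = q + t + pr`, `c₁ = pt + qr`, `c₀ = qt` of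
the product, the identity `c₁c₂c₃ - c₁² - c₀c₃² = pr((q - t)² + c₃c₁)` turns positivity of
`p, q, r, t` into the Hurwitz inequalities `c₁ < c₂c₃` and `c₁² + c₀c₃² < c₁c₂c₃`; with
`cᵢ = aᵢ₊₁λ` these are the two conditions of the theorem after dividing by powers of `a₂λ`.
-/

open Polynomial

lemma Complex.re_neg_and_re_neg_iff {u v : ℂ} {b c : ℝ} (hsum : u + v = -b)
    (hprod : u * v = c) : u.re < 0 ∧ v.re < 0 ↔ 0 < b ∧ 0 < c := by
  obtain ⟨x, y⟩ := u
  obtain ⟨x', y'⟩ := v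
  simp only [Complex.ext_iff, Complex.add_re, Complex.add_im, Complex.mul_re, Complex.mul_im,
    Complex.neg_re, Complex.neg_im, Complex.ofReal_re, Complex.ofReal_im] at hsum hprod
  obtain ⟨hsum_re, hsum_im⟩ := hsum
  obtain ⟨hprod_re, hprod_im⟩ := hprod
  obtain rfl : y' = -y := by linarith
  simp only
  constructor
  · rintro ⟨hx, hx'⟩
    exact ⟨by linarith, by nlinarith [mul_pos_of_neg_of_neg hx hx', sq_nonneg y]⟩
  · rintro ⟨hb, hc⟩
    rcases mul_eq_zero.mp (show y * (x' - x) = 0 by linarith) with rfl | hxx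
    · constructor <;> nlinarith
    · obtain rfl : x' = x := by linarith
      constructor <;> linarith

lemma quadratic_factor_coeffs_pos_iff {p q r t c₀ c₁ c₂ c₃ : ℝ} (h₃ : c₃ = p + r)
    (h₂ : c₂ = q + t + p * r) (h₁ : c₁ = p * t + q * r) (h₀ : c₀ = q * t) :
    ((0 < p ∧ 0 < q) ∧ 0 < r ∧ 0 < t) ↔
      0 < c₀ ∧ 0 < c₁ ∧ 0 < c₂ ∧ 0 < c₃ ∧ c₁ < c₂ * c₃ ∧
        c₁ ^ 2 + c₀ * c₃ ^ 2 < c₁ * c₂ * c₃ := by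
  subst h₀ h₁ h₂ h₃
  have key : (p * t + q * r) * (q + t + p * r) * (p + r) - (p * t + q * r) ^ 2
      - q * t * (p + r) ^ 2 = p * r * ((q - t) ^ 2 + (p + r) * (p * t + q * r)) := by ring
  constructor
  · rintro ⟨⟨hp, hq⟩, hr, ht⟩
    have hM : 0 < (q - t) ^ 2 + (p + r) * (p * t + q * r) :=
      add_pos_of_nonneg_of_pos (sq_nonneg _) (by positivity)
    refine ⟨by positivity, by positivity, by positivity, by positivity, ?_, ?_⟩
    · nlinarith [mul_pos hp hq, mul_pos hr ht, mul_pos (mul_pos hp hr) (add_pos hp hr)]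
    · linarith [mul_pos (mul_pos hp hr) hM]
  · rintro ⟨h₀, h₁, -, h₃, -, h⟩
    have hM : 0 < (q - t) ^ 2 + (p + r) * (p * t + q * r) :=
      add_pos_of_nonneg_of_pos (sq_nonneg _) (mul_pos h₃ h₁)
    have hpr : 0 < p * r := (pos_iff_pos_of_mul_pos (a := p * r) (by linarith)).mpr hM
    obtain ⟨hp, hr⟩ : 0 < p ∧ 0 < r := by
      rcases pos_and_pos_or_neg_and_neg_of_mul_pos hpr with hpr | ⟨hp, hr⟩
      · exact hpr
      · linarith
    rcases pos_and_pos_or_neg_and_neg_of_mul_pos h₀ with ⟨hq, ht⟩ | ⟨hq, ht⟩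
    · exact ⟨⟨hp, hq⟩, hr, ht⟩
    · nlinarith [mul_neg_of_pos_of_neg hp ht, mul_neg_of_neg_of_pos hq hr]

namespace Polynomial

def IsHurwitzStable (f : ℝ[X]) : Prop := ∀ z ∈ f.aroots ℂ, z.re < 0

lemma isHurwitzStable_quadratic_iff (b c : ℝ) :
    IsHurwitzStable (X ^ 2 + C b * X + C c) ↔ 0 < b ∧ 0 < c := by
  have hdeg : (X ^ 2 + C b * X + C c).natDegree = 2 := by compute_degree!
  obtain ⟨u, v, huv⟩ := Multiset.card_eq_two.mp
    (hdeg ▸ IsAlgClosed.card_aroots_eq_natDegree (B := ℂ))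
  have hvieta := (aroots_quadratic_eq_pair_iff_of_ne_zero (a := (1 : ℝ)) (S := ℂ)
    (by simp)).mp (by simpa using huv)
  simp only [map_one, Complex.coe_algebraMap, one_mul, neg_mul] at hvieta
  rw [IsHurwitzStable, huv,
    ← Complex.re_neg_and_re_neg_iff (neg_eq_iff_eq_neg.mp hvieta.1.symm) hvieta.2.symm]
  simp

lemma isHurwitzStable_mul_iff {f g : ℝ[X]} (hf : f ≠ 0) (hg : g ≠ 0) :
    IsHurwitzStable (f * g) ↔ IsHurwitzStable f ∧ IsHurwitzStable g := by
  simp only [IsHurwitzStable, aroots_mul (mul_ne_zero hf hg), Multiset.mem_add, or_imp,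
    forall_and]

lemma exists_linear_or_quadratic_dvd {f : ℝ[X]} (hf : 0 < f.natDegree) :
    (∃ a : ℝ, X - C a ∣ f) ∨ ∃ b c : ℝ, X ^ 2 + C b * X + C c ∣ f := by
  obtain ⟨z, hz⟩ :=
    IsAlgClosed.exists_aeval_eq_zero ℂ f (natDegree_pos_iff_degree_pos.mp hf).ne'
  by_cases him : z.im = 0
  · refine .inl ⟨z.re, dvd_iff_isRoot.mpr ?_⟩
    rw [← Complex.conj_eq_iff_re.mp (Complex.conj_eq_iff_im.mpr him)] at hz
    simpa using (aeval_algebraMap_apply_eq_algebraMap_eval (A := ℂ) z.re f).symm.trans hz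
  · refine .inr ⟨-(2 * z.re), ‖z‖ ^ 2, ?_⟩
    simpa [sub_eq_add_neg] using f.quadratic_dvd_of_aeval_eq_zero_im_ne_zero hz him

lemma exists_quadratic_dvd {f : ℝ[X]} (hf : 2 ≤ f.natDegree) :
    ∃ b c : ℝ, X ^ 2 + C b * X + C c ∣ f := by
  obtain ⟨a, g, rfl⟩ | hquad := exists_linear_or_quadratic_dvd (f := f) (by omega)
  · have hg : 0 < g.natDegree := by
      have : g ≠ 0 := by rintro rfl; simp at hf
      rw [natDegree_mul (X_sub_C_ne_zero a) this, natDegree_X_sub_C] at hf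
      omega
    obtain ⟨a', hdvd⟩ | ⟨b, c, hdvd⟩ := exists_linear_or_quadratic_dvd hg
    · refine ⟨-(a + a'), a * a', ?_⟩
      have : X ^ 2 + C (-(a + a')) * X + C (a * a') = (X - C a) * (X - C a') := by
        simp only [C_neg, C_add, C_mul]; ring
      exact this ▸ mul_dvd_mul_left _ hdvd
    · exact ⟨b, c, hdvd.mul_left _⟩
  · exact hquad

lemma Monic.exists_eq_quadratic_mul_quadratic {f : ℝ[X]} (hf : f.Monic) (h4 : f.natDegree = 4) :
    ∃ p q r t : ℝ, f = (X ^ 2 + C p * X + C q) * (X ^ 2 + C r * X + C t) := by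
  obtain ⟨p, q, g, rfl⟩ := exists_quadratic_dvd (f := f) (by omega)
  have hquad : (X ^ 2 + C p * X + C q).Monic := by monicity!
  have hg : g.Monic := hquad.of_mul_monic_left hf
  have hquad2 : (X ^ 2 + C p * X + C q).natDegree = 2 := by compute_degree!
  have hg2 : g.natDegree = 2 := by
    rw [hquad.natDegree_mul hg, hquad2] at h4
    omega
  refine ⟨p, q, g.coeff 1, g.coeff 0, ?_⟩
  conv_lhs => rw [eq_quadratic_of_degree_le_two (natDegree_le_iff_degree_le.mp hg2.le)]
  rw [← hg2, hg.coeff_natDegree, hg2, C_1, one_mul]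

lemma quadratic_mul_quadratic (p q r t : ℝ) :
    (X ^ 2 + C p * X + C q) * (X ^ 2 + C r * X + C t) =
      X ^ 4 + C (p + r) * X ^ 3 + C (q + t + p * r) * X ^ 2 + C (p * t + q * r) * X +
        C (q * t) := by
  simp only [C_add, C_mul]
  ring

lemma isHurwitzStable_quartic_iff (c₀ c₁ c₂ c₃ : ℝ) :
    IsHurwitzStable (X ^ 4 + C c₃ * X ^ 3 + C c₂ * X ^ 2 + C c₁ * X + C c₀) ↔
      0 < c₀ ∧ 0 < c₁ ∧ 0 < c₂ ∧ 0 < c₃ ∧ c₁ < c₂ * c₃ ∧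
        c₁ ^ 2 + c₀ * c₃ ^ 2 < c₁ * c₂ * c₃ := by
  have hmonic : (X ^ 4 + C c₃ * X ^ 3 + C c₂ * X ^ 2 + C c₁ * X + C c₀).Monic := by monicity!
  obtain ⟨p, q, r, t, hpqrt⟩ := hmonic.exists_eq_quadratic_mul_quadratic (by compute_degree!)
  have hcoeff := hpqrt.trans (quadratic_mul_quadratic p q r t)
  have h₃ := congrArg (coeff · 3) hcoeff
  have h₂ := congrArg (coeff · 2) hcoeff
  have h₁ := congrArg (coeff · 1) hcoeff
  have h₀ := congrArg (coeff · 0) hcoeff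
  simp only [coeff_add, coeff_C_mul, coeff_X_pow, coeff_C, coeff_X] at h₃ h₂ h₁ h₀
  norm_num at h₃ h₂ h₁ h₀
  rw [hpqrt, isHurwitzStable_mul_iff (Monic.ne_zero (by monicity!))
    (Monic.ne_zero (by monicity!)), isHurwitzStable_quadratic_iff, isHurwitzStable_quadratic_iff]
  exact quadratic_factor_coeffs_pos_iff h₃ h₂ h₁ h₀

end Polynomial

/-- Hurwitz criterion for `p(s) = s⁴ + a₄λs³ + a₃λs² + a₂λs + a₁λ` with
`λ > 0`: every complex root has strictly negative real part iff
`a₁, a₂, a₃, a₄ > 0`, `(a₃a₄/a₂)·λ > 1`, and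
`((a₃a₄/a₂) − (a₁a₄²/a₂²))·λ > 1`. -/
theorem quartic_hurwitz (lam a₁ a₂ a₃ a₄ : ℝ) (hlam : 0 < lam) :
    (∀ z ∈ ((X ^ 4 + C ((a₄ * lam : ℝ) : ℂ) * X ^ 3 + C ((a₃ * lam : ℝ) : ℂ) * X ^ 2
        + C ((a₂ * lam : ℝ) : ℂ) * X + C ((a₁ * lam : ℝ) : ℂ)) : Polynomial ℂ).roots,
        z.re < 0) ↔
      (0 < a₁ ∧ 0 < a₂ ∧ 0 < a₃ ∧ 0 < a₄ ∧
        1 < (a₃ * a₄ / a₂) * lam ∧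
        1 < ((a₃ * a₄ / a₂) - (a₁ * a₄ ^ 2 / a₂ ^ 2)) * lam) := by
  have hreal := isHurwitzStable_quartic_iff (a₁ * lam) (a₂ * lam) (a₃ * lam) (a₄ * lam)
  simp only [IsHurwitzStable, aroots_def, Polynomial.map_add, Polynomial.map_mul,
    Polynomial.map_pow, map_X, map_C, Complex.coe_algebraMap] at hreal
  rw [hreal, mul_pos_iff_of_pos_right hlam, mul_pos_iff_of_pos_right hlam,
    mul_pos_iff_of_pos_right hlam, mul_pos_iff_of_pos_right hlam]
  refine and_congr_right fun _ => and_congr_right fun ha₂ => and_congr_right fun _ =>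
    and_congr_right fun _ => and_congr ?_ ?_
  · rw [div_mul_eq_mul_div, one_lt_div ha₂,
      show a₃ * lam * (a₄ * lam) = a₃ * a₄ * lam * lam by ring, mul_lt_mul_iff_left₀ hlam]
  · have hlhs : (a₂ * lam) ^ 2 + a₁ * lam * (a₄ * lam) ^ 2 =
        (a₂ ^ 2 + a₁ * a₄ ^ 2 * lam) * lam ^ 2 := by ring
    have hrhs : a₂ * lam * (a₃ * lam) * (a₄ * lam) = a₂ * a₃ * a₄ * lam * lam ^ 2 := by ring
    have hdiff : (a₃ * a₄ / a₂ - a₁ * a₄ ^ 2 / a₂ ^ 2) * lam =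
        (a₂ * a₃ * a₄ - a₁ * a₄ ^ 2) * lam / a₂ ^ 2 := by
      field_simp
    rw [hlhs, hrhs, mul_lt_mul_iff_left₀ (by positivity), hdiff, one_lt_div (by positivity)]
    constructor <;> intro h <;> linarith
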